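/- For every real α, the linear operators E, F, H on the real vector space of finitely supported real-valued functions on the set of strict partitions, defined on the basis vectors ε_λ by E ε_λ = Σ_{x∈X(λ)} 2^{−δ(x,0)} (x(x+1)+α) ε_{λ+□(x)}, F ε_λ = −Σ_{y∈Y(λ)} ε_{λ−□(y)}, H ε_λ = (α/2 + 2|λ|) ε_λ, satisfy the sl(2) commutation relations [E, H] = −2E, [F, H] = 2F, [E, F] = H, where [A, B] = AB − BA and δ(x,0) is the Kronecker delta. -/

import Mathlib

/-!
`E` raises the weight `|λ|` by one and `F` lowers it by one, while `H` is diagonal with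
eigenvalue `α/2 + 2|λ|`; this gives the first two relations. In `[E, F] ε_λ`, adding a box of
content `x` and removing a box of content `y ≠ x` commute, so these terms occur in both
`E F ε_λ` and `F E ε_λ` with the same coefficient and cancel. What is left is the diagonal term
`Σ_{x ∈ X(λ)} c(x) − Σ_{y ∈ Y(λ)} c(y)` with `c(x) = 2^{−δ(x,0)} (x(x+1)+α)`; since addable and
removable contents interlace, it telescopes over the parts `a` of `λ`: each contributes
`a(a+1) − (a−1)a = 2a`, and the `α`-terms cancel up to a net `α/2` coming from content `0`.
-/

open Finset

/-- A strict partition is encoded as the finite set of its (distinct, positive) parts: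
`S` is a strict partition iff `0 ∉ S`. -/
def IsStrictPartition (S : Finset ℕ) : Prop := 0 ∉ S

/-- The weight `|λ|` of a strict partition: the sum of its parts. -/
def wt (S : Finset ℕ) : ℕ := ∑ a ∈ S, a

/-- The length `ℓ(λ)` of a strict partition: its number of parts. -/
def len (S : Finset ℕ) : ℕ := S.card

/-- The set `X(λ)` of addable contents of the strict partition `λ`:
the contents `x` of boxes that can be added to the shifted Young diagram.
A part `a ∈ S` gives the addable content `a` iff `a + 1` is not a part, and `0` is an
addable content iff `1` is not a part (i.e. `λ` is empty or its smallest part is `≥ 2`). -/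
def Xset (S : Finset ℕ) : Finset ℕ :=
  (S.filter (fun x => x + 1 ∉ S)) ∪ (if 1 ∉ S then {0} else ∅)

/-- The set `Y(λ)` of removable contents of the strict partition `λ`:
`y ∈ Y(λ)` iff `y + 1` is a part and `y` is not a part. -/
def Yset (S : Finset ℕ) : Finset ℕ :=
  (S.filter (fun p => p - 1 ∉ S)).image (fun p => p - 1)

/-- `λ + □(x)`: add to `λ` the box of content `x ∈ X(λ)`. -/
def addBox (S : Finset ℕ) (x : ℕ) : Finset ℕ :=
  if x = 0 then insert 1 S else insert (x + 1) (S.erase x)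

/-- `λ − □(y)`: remove from `λ` the box of content `y ∈ Y(λ)`. -/
def removeBox (S : Finset ℕ) (y : ℕ) : Finset ℕ :=
  if y = 0 then S.erase 1 else insert y (S.erase (y + 1))

/-- `c(c+1)` as a real number. -/
def cc (t : ℕ) : ℝ := t * (t + 1)

/-- The number `h(λ)` of standard shifted tableaux (with the doubled-edge convention):
`h(λ) = 2^{|λ|−ℓ(λ)} |λ|!/(λ_1!⋯λ_ℓ!) ∏_{i<j} (λ_i−λ_j)/(λ_i+λ_j)`. -/
noncomputable def hfun (S : Finset ℕ) : ℝ :=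
  2 ^ (wt S - len S) * (Nat.factorial (wt S) : ℝ) / (∏ a ∈ S, (Nat.factorial a : ℝ)) *
    ∏ p ∈ S.offDiag.filter (fun p => p.2 < p.1), (((p.1 : ℝ) - p.2) / ((p.1 : ℝ) + p.2))

/-- The partial fraction coefficients `θ↑_x(λ)`, `x ∈ X(λ)`. -/
noncomputable def thetaUp (S : Finset ℕ) (xh : ℕ) : ℝ :=
  if xh = 0 then (∏ y ∈ Yset S, cc y) / (∏ x ∈ (Xset S).erase 0, cc x)
  else (∏ y ∈ Yset S, (cc xh - cc y)) /
    (cc xh * ∏ x ∈ ((Xset S).erase 0).erase xh, (cc xh - cc x))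

/-- The partial fraction coefficients `θ↓_y(λ)`, `y ∈ Y(λ)`. -/
noncomputable def thetaDown (S : Finset ℕ) (yh : ℕ) : ℝ :=
  (∏ x ∈ (Xset S).erase 0, (cc yh - cc x)) / (∏ y ∈ (Yset S).erase yh, (cc yh - cc y))

/-- `Z_α(n) = α(α+2)⋯(α+2n−2)`. -/
noncomputable def Zfun (α : ℝ) (n : ℕ) : ℝ := ∏ k ∈ Finset.range n, (α + 2 * k)

/-- The multiplicative measure weight
`M_n^α(λ) = (h(λ)² 2^{ℓ−n}/n!) ⬝ ∏_{□∈λ}(c(□)(c(□)+1)+α) / Z_α(n)`. -/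
noncomputable def Mw (α : ℝ) (n : ℕ) (S : Finset ℕ) : ℝ :=
  hfun S ^ 2 * 2 ^ len S / 2 ^ n / (Nat.factorial n : ℝ) *
    (∏ p ∈ S, ∏ c ∈ Finset.range p, (cc c + α)) / Zfun α n

/-- The type of strict partitions. -/
def SP : Type := {S : Finset ℕ // 0 ∉ S}

instance : DecidableEq SP := inferInstanceAs (DecidableEq {S : Finset ℕ // 0 ∉ S})

/-- Adding a box to a strict partition yields a strict partition. -/
def addBoxSP (lam : SP) (x : ℕ) : SP :=
  ⟨addBox lam.1 x, by
    have h0 := lam.2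
    unfold addBox
    split_ifs <;> simp [Finset.mem_insert, Finset.mem_erase, h0]⟩

/-- Removing a box from a strict partition yields a strict partition. -/
def removeBoxSP (lam : SP) (y : ℕ) : SP :=
  ⟨removeBox lam.1 y, by
    have h0 := lam.2
    unfold removeBox
    split_ifs with h
    · simp [Finset.mem_erase, h0]
    · simp [Finset.mem_insert, Finset.mem_erase, h0, Ne.symm h]⟩

/-- `E ε_λ = ∑_{x∈X(λ)} 2^{−δ(x,0)} (x(x+1)+α) ε_{λ+□(x)}`. -/
noncomputable def Evec (α : ℝ) (lam : SP) : SP →₀ ℝ :=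
  ∑ x ∈ Xset lam.1,
    ((if x = 0 then (2 : ℝ)⁻¹ else 1) * (cc x + α)) • Finsupp.single (addBoxSP lam x) 1

/-- `F ε_λ = −∑_{y∈Y(λ)} ε_{λ−□(y)}`. -/
noncomputable def Fvec (lam : SP) : SP →₀ ℝ :=
  -∑ y ∈ Yset lam.1, Finsupp.single (removeBoxSP lam y) (1 : ℝ)

/-- `H ε_λ = (α/2 + 2|λ|) ε_λ`. -/
noncomputable def Hvec (α : ℝ) (lam : SP) : SP →₀ ℝ :=
  Finsupp.single lam (α / 2 + 2 * (wt lam.1 : ℝ))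

/-- The operator `E`, defined on basis vectors by linear extension. -/
noncomputable def Eop (α : ℝ) (f : SP →₀ ℝ) : SP →₀ ℝ := f.sum fun lam r => r • Evec α lam

/-- The operator `F`, defined on basis vectors by linear extension. -/
noncomputable def Fop (f : SP →₀ ℝ) : SP →₀ ℝ := f.sum fun lam r => r • Fvec lam

/-- The operator `H`, defined on basis vectors by linear extension. -/
noncomputable def Hop (α : ℝ) (f : SP →₀ ℝ) : SP →₀ ℝ := f.sum fun lam r => r • Hvec α lam

section Commutator

open Finsupp

variable {ι R : Type*} [CommRing R]

theorem linearCombination_commutator_apply {u v w : ι → ι →₀ R}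
    (h : ∀ i, linearCombination R u (v i) - linearCombination R v (u i) = w i) (f : ι →₀ R) :
    linearCombination R u (linearCombination R v f) -
      linearCombination R v (linearCombination R u f) = linearCombination R w f := by
  induction f using Finsupp.induction_linear with
  | zero => simp
  | add f g hf hg => simp only [map_add, ← hf, ← hg]; abel
  | single i r => simp [← h, smul_sub]

theorem linearCombination_commutator_apply_of_eq_smul {u v : ι → ι →₀ R} {c : R}
    (h : ∀ i, linearCombination R u (v i) - linearCombination R v (u i) = c • u i)
    (f : ι →₀ R) :
    linearCombination R u (linearCombination R v f) -
      linearCombination R v (linearCombination R u f) = c • linearCombination R u f := by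
  rw [linearCombination_commutator_apply h, linearCombination_apply, linearCombination_apply,
    Finsupp.smul_sum]
  simp only [smul_comm c]

end Commutator

section Boxes

variable {S : Finset ℕ} {x y n : ℕ}

theorem mem_Xset : x ∈ Xset S ↔ (x ∈ S ∨ x = 0) ∧ x + 1 ∉ S := by
  unfold Xset
  split_ifs <;> simp only [mem_union, mem_filter, mem_singleton, notMem_empty] <;> grind

theorem mem_Yset (h0 : 0 ∉ S) : y ∈ Yset S ↔ y + 1 ∈ S ∧ y ∉ S := by
  simp only [Yset, mem_image, mem_filter]
  constructor
  · rintro ⟨p, ⟨hp, hp1⟩, rfl⟩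
    obtain ⟨q, rfl⟩ : ∃ q, p = q + 1 := Nat.exists_eq_add_one.2 (Nat.pos_of_ne_zero (by grind))
    simpa using ⟨hp, hp1⟩
  · exact fun h => ⟨y + 1, by simpa using h, rfl⟩

theorem mem_addBox (h0 : 0 ∉ S) : n ∈ addBox S x ↔ n = x + 1 ∨ n ∈ S ∧ n ≠ x := by
  unfold addBox
  split_ifs <;> simp only [mem_insert, mem_erase] <;> grind

theorem mem_removeBox : n ∈ removeBox S y ↔ n ∈ S ∧ n ≠ y + 1 ∨ n = y ∧ y ≠ 0 := by
  unfold removeBox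
  split_ifs <;> simp only [mem_insert, mem_erase] <;> grind

theorem zero_notMem_addBox (h0 : 0 ∉ S) : 0 ∉ addBox S x := (addBoxSP ⟨S, h0⟩ x).2

theorem zero_notMem_removeBox (h0 : 0 ∉ S) : 0 ∉ removeBox S y := (removeBoxSP ⟨S, h0⟩ y).2

theorem mem_Yset_addBox_self (h0 : 0 ∉ S) : x ∈ Yset (addBox S x) := by
  rw [mem_Yset (zero_notMem_addBox h0), mem_addBox h0, mem_addBox h0]
  grind

theorem mem_Xset_removeBox_self : y ∈ Xset (removeBox S y) := by
  rw [mem_Xset, mem_removeBox, mem_removeBox]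
  grind

theorem removeBox_addBox (h0 : 0 ∉ S) (hx : x ∈ Xset S) : removeBox (addBox S x) x = S := by
  rw [mem_Xset] at hx
  ext n
  rw [mem_removeBox, mem_addBox h0]
  grind

theorem addBox_removeBox (h0 : 0 ∉ S) (hy : y ∈ Yset S) : addBox (removeBox S y) y = S := by
  rw [mem_Yset h0] at hy
  ext n
  rw [mem_addBox (zero_notMem_removeBox h0), mem_removeBox]
  grind

theorem mem_erase_Yset_addBox (h0 : 0 ∉ S) (hx : x ∈ Xset S) :
    y ∈ (Yset (addBox S x)).erase x ↔ y ∈ Yset S ∧ y + 1 ≠ x ∧ y ≠ x + 1 := by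
  rw [mem_Xset] at hx
  rw [mem_erase, mem_Yset (zero_notMem_addBox h0), mem_addBox h0, mem_addBox h0, mem_Yset h0]
  grind

theorem mem_erase_Xset_removeBox (h0 : 0 ∉ S) (hy : y ∈ Yset S) :
    x ∈ (Xset (removeBox S y)).erase y ↔ x ∈ Xset S ∧ y + 1 ≠ x ∧ y ≠ x + 1 := by
  rw [mem_Yset h0] at hy
  rw [mem_erase, mem_Xset, mem_removeBox, mem_removeBox, mem_Xset]
  grind

theorem removeBox_addBox_comm (h0 : 0 ∉ S) (hxy : x ≠ y) :
    removeBox (addBox S x) y = addBox (removeBox S y) x := by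
  ext n
  rw [mem_removeBox, mem_addBox h0, mem_addBox (zero_notMem_removeBox h0), mem_removeBox]
  grind

theorem wt_addBox (hx : x ∈ Xset S) : wt (addBox S x) = wt S + 1 := by
  rw [mem_Xset] at hx
  unfold addBox wt
  split_ifs with h
  · subst h
    rw [sum_insert hx.2, add_comm]
  · rw [sum_insert fun hm => hx.2 (mem_of_mem_erase hm), ← add_sum_erase S _ (hx.1.resolve_right h)]
    omega

theorem wt_removeBox (h0 : 0 ∉ S) (hy : y ∈ Yset S) : wt (removeBox S y) + 1 = wt S := by
  rw [mem_Yset h0] at hy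
  unfold removeBox wt
  split_ifs with h
  · subst h
    rw [← sum_erase_add S _ hy.1]
  · rw [sum_insert fun hm => hy.2 (mem_of_mem_erase hm), ← add_sum_erase S _ hy.1]
    omega

theorem sum_Xset_sub_sum_Yset {R : Type*} [CommRing R] (h0 : 0 ∉ S) (g : ℕ → R) :
    ∑ x ∈ Xset S, g x - ∑ y ∈ Yset S, g y
      = ∑ a ∈ S, (g a - g (a - 1)) + if 1 ∈ S then 0 else g 0 := by
  obtain ⟨N, hN, hS⟩ : ∃ N, 0 < N ∧ ∀ a ∈ S, a + 1 < N :=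
    ⟨S.sup id + 2, by omega, fun a ha => by
      have := le_sup (f := id) ha
      simp only [id] at this
      omega⟩
  have sum_eq (M : ℕ) (t : Finset ℕ) (ht : ∀ n ∈ t, n < M) (f : ℕ → R) :
      ∑ n ∈ t, f n = ∑ n ∈ range M, if n ∈ t then f n else 0 := by
    rw [sum_ite_mem, inter_eq_right.2 fun n hn => mem_range.2 (ht n hn)]
  have hX : ∀ n ∈ Xset S, n < N := fun n hn => by
    rcases (mem_Xset.1 hn).1 with hn | rfl
    · have := hS n hn
      omega
    · omega
  have hY : ∀ n ∈ Yset S, n < N := fun n hn => by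
    have := hS _ ((mem_Yset h0).1 hn).1
    omega
  have hshift : ∑ n ∈ range N, (if n + 1 ∈ S then g n else 0) = ∑ a ∈ S, g (a - 1) := by
    rw [sum_eq (N + 1) S (fun a ha => by have := hS a ha; omega), sum_range_succ' _ N]
    simp [h0]
  have hpoint : ∀ n, ((if n ∈ Xset S then g n else 0) - if n ∈ Yset S then g n else 0)
      = ((if n ∈ S then g n else 0) - (if n + 1 ∈ S then g n else 0))
        + if n = 0 then (if 1 ∈ S then 0 else g 0) else 0 := by
    intro n
    rcases n with _ | n
    · by_cases h1 : 1 ∈ S <;> simp [mem_Xset, mem_Yset h0, h0, h1]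
    · by_cases h1 : n + 1 ∈ S <;> by_cases h2 : n + 2 ∈ S <;> simp [mem_Xset, mem_Yset h0, h1, h2]
  rw [sum_eq N _ hX, sum_eq N _ hY, ← sum_sub_distrib, sum_congr rfl fun n _ => hpoint n,
    sum_add_distrib, sum_sub_distrib, ← sum_eq N S fun a ha => (Nat.lt_succ_self a).trans (hS a ha),
    hshift, sum_ite_eq', sum_sub_distrib]
  simp [hN]

end Boxes

noncomputable def addCoeff (α : ℝ) (x : ℕ) : ℝ := (if x = 0 then (2 : ℝ)⁻¹ else 1) * (cc x + α)

theorem sum_addCoeff_Xset_sub_Yset {S : Finset ℕ} (h0 : 0 ∉ S) (α : ℝ) :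
    ∑ x ∈ Xset S, addCoeff α x - ∑ y ∈ Yset S, addCoeff α y = α / 2 + 2 * (wt S : ℝ) := by
  have hstep : ∀ a ∈ S, addCoeff α a - addCoeff α (a - 1) = 2 * a + if a = 1 then α / 2 else 0 := by
    intro a ha
    obtain ⟨b, rfl⟩ : ∃ b, a = b + 1 := Nat.exists_eq_add_one.2 (Nat.pos_of_ne_zero (by grind))
    rcases b with _ | b <;> simp [addCoeff, cc] <;> ring
  rw [sum_Xset_sub_sum_Yset h0, sum_congr rfl hstep, sum_add_distrib, sum_ite_eq', ← mul_sum, wt]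
  push_cast
  split_ifs <;> simp [addCoeff, cc] <;> ring

/-- The pairs `(x, y)` with `y ≠ x` and `y ∈ Y(λ + □(x))`, equivalently with `x ≠ y` and
`x ∈ X(λ − □(y))`: they index the terms shared by `E F ε_λ` and `F E ε_λ`. -/
def crossPairs (S : Finset ℕ) : Finset (ℕ × ℕ) :=
  (Xset S ×ˢ Yset S).filter fun p => p.2 + 1 ≠ p.1 ∧ p.2 ≠ p.1 + 1

noncomputable def crossSum (α : ℝ) (lam : SP) : SP →₀ ℝ :=
  ∑ p ∈ crossPairs lam.1, addCoeff α p.1 • Finsupp.single (addBoxSP (removeBoxSP lam p.2) p.1) 1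

section Operators

open Finsupp

variable {α : ℝ} {lam : SP} {x y : ℕ}

theorem Evec_eq : Evec α lam = ∑ x ∈ Xset lam.1, addCoeff α x • single (addBoxSP lam x) 1 := rfl

theorem Fvec_eq : Fvec lam = -∑ y ∈ Yset lam.1, single (removeBoxSP lam y) 1 := rfl

theorem Hvec_eq : Hvec α lam = (α / 2 + 2 * (wt lam.1 : ℝ)) • single lam 1 :=
  (smul_single_one _ _).symm

theorem addBoxSP_removeBoxSP (hy : y ∈ Yset lam.1) : addBoxSP (removeBoxSP lam y) y = lam :=
  Subtype.ext (addBox_removeBox lam.2 hy)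

theorem removeBoxSP_addBoxSP (hx : x ∈ Xset lam.1) : removeBoxSP (addBoxSP lam x) x = lam :=
  Subtype.ext (removeBox_addBox lam.2 hx)

theorem removeBoxSP_addBoxSP_comm (hxy : x ≠ y) :
    removeBoxSP (addBoxSP lam x) y = addBoxSP (removeBoxSP lam y) x :=
  Subtype.ext (removeBox_addBox_comm lam.2 hxy)

theorem linearCombination_Hvec_single (μ : SP) (r : ℝ) :
    linearCombination ℝ (Hvec α) (single μ r) = (α / 2 + 2 * (wt μ.1 : ℝ)) • single μ r := by
  rw [linearCombination_single, Hvec_eq, smul_comm, smul_single_one]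

theorem linearCombination_Hvec_Evec :
    linearCombination ℝ (Hvec α) (Evec α lam) = (α / 2 + 2 * (wt lam.1 : ℝ) + 2) • Evec α lam := by
  rw [Evec_eq, map_sum, Finset.smul_sum]
  refine sum_congr rfl fun x hx => ?_
  rw [map_smul, linearCombination_Hvec_single, addBoxSP, wt_addBox hx]
  push_cast
  module

theorem linearCombination_Hvec_Fvec :
    linearCombination ℝ (Hvec α) (Fvec lam) = (α / 2 + 2 * (wt lam.1 : ℝ) - 2) • Fvec lam := by
  rw [Fvec_eq, map_neg, map_sum, smul_neg, Finset.smul_sum]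
  refine congrArg _ (sum_congr rfl fun y hy => ?_)
  have hwt : (wt (removeBox lam.1 y) : ℝ) = wt lam.1 - 1 := by
    rw [← wt_removeBox lam.2 hy]
    push_cast
    ring
  rw [linearCombination_Hvec_single, removeBoxSP, hwt]
  module

theorem sum_Evec_removeBoxSP :
    ∑ y ∈ Yset lam.1, Evec α (removeBoxSP lam y)
      = (∑ y ∈ Yset lam.1, addCoeff α y) • single lam 1 + crossSum α lam := by
  rw [crossSum,
    sum_finset_product_right _ (Yset lam.1) (fun y => (Xset (removeBox lam.1 y)).erase y),
    Finset.sum_smul, ← sum_add_distrib]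
  · refine sum_congr rfl fun y hy => ?_
    rw [Evec_eq, ← Finset.add_sum_erase (Xset (removeBoxSP lam y).1) _ mem_Xset_removeBox_self,
      addBoxSP_removeBoxSP hy]
    rfl
  · rintro ⟨x, y⟩
    simp only [crossPairs, mem_filter, mem_product]
    constructor
    · rintro ⟨⟨hx, hy⟩, hne⟩
      exact ⟨hy, (mem_erase_Xset_removeBox lam.2 hy).2 ⟨hx, hne⟩⟩
    · rintro ⟨hy, hx⟩
      obtain ⟨hx, hne⟩ := (mem_erase_Xset_removeBox lam.2 hy).1 hx
      exact ⟨⟨hx, hy⟩, hne⟩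

theorem sum_smul_Fvec_addBoxSP :
    ∑ x ∈ Xset lam.1, addCoeff α x • Fvec (addBoxSP lam x)
      = -((∑ x ∈ Xset lam.1, addCoeff α x) • single lam 1 + crossSum α lam) := by
  rw [crossSum, sum_finset_product _ (Xset lam.1) (fun x => (Yset (addBox lam.1 x)).erase x),
    Finset.sum_smul, ← sum_add_distrib, ← sum_neg_distrib]
  · refine sum_congr rfl fun x hx => ?_
    rw [Fvec_eq, ← Finset.add_sum_erase (Yset (addBoxSP lam x).1) _ (mem_Yset_addBox_self lam.2),
      removeBoxSP_addBoxSP hx, smul_neg, smul_add, Finset.smul_sum]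
    refine congrArg (fun v => -(_ + v)) (sum_congr rfl fun y hy => ?_)
    rw [removeBoxSP_addBoxSP_comm (ne_of_mem_erase hy).symm]
  · rintro ⟨x, y⟩
    simp only [crossPairs, mem_filter, mem_product]
    constructor
    · rintro ⟨⟨hx, hy⟩, hne⟩
      exact ⟨hx, (mem_erase_Yset_addBox lam.2 hx).2 ⟨hy, hne⟩⟩
    · rintro ⟨hx, hy⟩
      obtain ⟨hy, hne⟩ := (mem_erase_Yset_addBox lam.2 hx).1 hy
      exact ⟨⟨hx, hy⟩, hne⟩

theorem linearCombination_Evec_Fvec_sub_Fvec_Evec :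
    linearCombination ℝ (Evec α) (Fvec lam) - linearCombination ℝ Fvec (Evec α lam) =
      Hvec α lam := by
  have hE : linearCombination ℝ (Evec α) (Fvec lam) =
      -∑ y ∈ Yset lam.1, Evec α (removeBoxSP lam y) := by
    simp [Fvec_eq]
  have hF : linearCombination ℝ Fvec (Evec α lam) =
      ∑ x ∈ Xset lam.1, addCoeff α x • Fvec (addBoxSP lam x) := by
    simp [Evec_eq]
  rw [hE, hF, sum_Evec_removeBoxSP, sum_smul_Fvec_addBoxSP, Hvec_eq,
    ← sum_addCoeff_Xset_sub_Yset lam.2, sub_smul]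
  abel

end Operators

/-- **Lemma 2.4.** For every real `α`, the Kerov-type operators `E`, `F`, `H` on the
space of finitely supported functions on strict partitions satisfy the `sl(2)`
commutation relations `[E,H] = −2E`, `[F,H] = 2F`, `[E,F] = H`. -/
theorem kerov_operators_sl2 (α : ℝ) :
    (∀ f : SP →₀ ℝ, Eop α (Hop α f) - Hop α (Eop α f) = (-2 : ℝ) • Eop α f) ∧
    (∀ f : SP →₀ ℝ, Fop (Hop α f) - Hop α (Fop f) = (2 : ℝ) • Fop f) ∧
    (∀ f : SP →₀ ℝ, Eop α (Fop f) - Fop (Eop α f) = Hop α f) := by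
  refine ⟨linearCombination_commutator_apply_of_eq_smul (u := Evec α) (v := Hvec α) fun lam => ?_,
    linearCombination_commutator_apply_of_eq_smul (u := Fvec) (v := Hvec α) fun lam => ?_,
    linearCombination_commutator_apply (u := Evec α) (v := Fvec) fun _ =>
      linearCombination_Evec_Fvec_sub_Fvec_Evec⟩
  · rw [Hvec, Finsupp.linearCombination_single, linearCombination_Hvec_Evec]
    module
  · rw [Hvec, Finsupp.linearCombination_single, linearCombination_Hvec_Fvec]
    module
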